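/- Let M be a real symmetric positive semidefinite 3×3 matrix of rank at least 2 (i.e., with no more than one zero eigenvalue), let g ∈ ℝ³, and let k_c, k_p, k_v > 0. For R̃ ∈ SO(3) and p̃_e, ṽ ∈ ℝ³, the equilibrium conditions P_a(M R̃) = 0, −k_c k_p p̃_e + ṽ = 0, and −k_c k_v p̃_e + (I₃ − R̃) g = 0 hold with (R̃, p̃_e, ṽ) ≠ (I₃, 0, 0) if and only if there exist a unit vector u ∈ ℝ³ and λ ∈ ℝ with M u = λ u such that R̃ = 2 u uᵀ − I₃, p̃_e = (k_c k_v)⁻¹ (I₃ − R̃) g, and ṽ = k_c k_p p̃_e. -/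

import Mathlib

open Matrix

/-- `SO(3)`: real 3×3 matrices with `Rᵀ R = I₃` and `det R = 1`. -/
def SO3 (R : Matrix (Fin 3) (Fin 3) ℝ) : Prop := Rᵀ * R = 1 ∧ R.det = 1

/-- The anti-symmetric projection `P_a(A) := (A − Aᵀ)/2`. -/
noncomputable def antiProj (A : Matrix (Fin 3) (Fin 3) ℝ) : Matrix (Fin 3) (Fin 3) ℝ :=
  (1/2 : ℝ) • (A - Aᵀ)

noncomputable def crs (a b : Fin 3 → ℝ) : Fin 3 → ℝ :=
  ![a 1 * b 2 - a 2 * b 1, a 2 * b 0 - a 0 * b 2, a 0 * b 1 - a 1 * b 0]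

lemma aux_det_rows (a b c : Fin 3 → ℝ) : (Matrix.of ![a, b, c]).det = crs a b ⬝ᵥ c := by
  simp [Matrix.det_fin_three, crs, dotProduct, Fin.sum_univ_three]; ring

lemma aux_rows_mul (R : Matrix (Fin 3) (Fin 3) ℝ) (a b c : Fin 3 → ℝ) :
    Matrix.of ![a, b, c] * Rᵀ = Matrix.of ![R *ᵥ a, R *ᵥ b, R *ᵥ c] := by
  ext i j
  fin_cases i <;> simp [mul_apply, mulVec, dotProduct, Fin.sum_univ_three, mul_comm]

lemma aux_dot_mulVec_same {R : Matrix (Fin 3) (Fin 3) ℝ} (h : Rᵀ * R = 1) (u v : Fin 3 → ℝ) :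
    (R *ᵥ u) ⬝ᵥ (R *ᵥ v) = u ⬝ᵥ v := by
  rw [dotProduct_mulVec, ← transpose_transpose R, vecMul_transpose, transpose_transpose,
    mulVec_mulVec, h, one_mulVec]

lemma aux_equiv {R : Matrix (Fin 3) (Fin 3) ℝ} (h1 : Rᵀ * R = 1) (h2 : R.det = 1)
    (a b : Fin 3 → ℝ) : crs (R *ᵥ a) (R *ᵥ b) = R *ᵥ crs a b := by
  have hRRt : R * Rᵀ = 1 := mul_eq_one_comm.mp h1
  set y := crs (R *ᵥ a) (R *ᵥ b) - R *ᵥ crs a b with hy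
  have key : ∀ x : Fin 3 → ℝ, y ⬝ᵥ (R *ᵥ x) = 0 := by
    intro x
    rw [hy, sub_dotProduct]
    have e1 : crs (R *ᵥ a) (R *ᵥ b) ⬝ᵥ (R *ᵥ x) = crs a b ⬝ᵥ x := by
      rw [← aux_det_rows, ← aux_rows_mul, det_mul, det_transpose, h2, mul_one, aux_det_rows]
    rw [e1, aux_dot_mulVec_same h1, sub_self]
  have h0 : y ⬝ᵥ y = 0 := by
    have := key (Rᵀ *ᵥ y)
    rwa [mulVec_mulVec, hRRt, one_mulVec] at this
  have := dotProduct_self_eq_zero.mp h0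
  exact sub_eq_zero.mp this

lemma aux_fix_two {R : Matrix (Fin 3) (Fin 3) ℝ} (h1 : Rᵀ * R = 1) (h2 : R.det = 1)
    {a b : Fin 3 → ℝ} (ha : R *ᵥ a = a) (hb : R *ᵥ b = b) (hab : crs a b ≠ 0) : R = 1 := by
  have hc : R *ᵥ crs a b = crs a b := by
    rw [← aux_equiv h1 h2, ha, hb]
  set c := crs a b with hcdef
  have hN : Matrix.of ![a, b, c] * Rᵀ = Matrix.of ![a, b, c] := by
    rw [aux_rows_mul, ha, hb, hc]
  have hdet : (Matrix.of ![a, b, c]).det ≠ 0 := by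
    rw [aux_det_rows]
    exact fun h => hab (dotProduct_self_eq_zero.mp h)
  have hinv : IsUnit (Matrix.of ![a, b, c]).det := isUnit_iff_ne_zero.mpr hdet
  have hRt : Rᵀ = 1 := by
    have h' : (Matrix.of ![a, b, c])⁻¹ * (Matrix.of ![a, b, c] * Rᵀ)
        = (Matrix.of ![a, b, c])⁻¹ * Matrix.of ![a, b, c] := by rw [hN]
    rwa [← mul_assoc, nonsing_inv_mul _ hinv, one_mul] at h' 
  calc R = Rᵀᵀ := (transpose_transpose R).symm
  _ = 1 := by rw [hRt, transpose_one]

lemma aux_double_cross (w v : Fin 3 → ℝ) :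
    crs w (crs w v) = (w ⬝ᵥ v) • w - (w ⬝ᵥ w) • v := by
  ext i; fin_cases i <;> simp [crs, dotProduct, Fin.sum_univ_three] <;> ring

lemma aux_parallel {w v : Fin 3 → ℝ} (hw : w ≠ 0) (h : crs w v = 0) :
    v = ((w ⬝ᵥ w)⁻¹ * (w ⬝ᵥ v)) • w := by
  have hs : w ⬝ᵥ w ≠ 0 := fun h0 => hw (dotProduct_self_eq_zero.mp h0)
  have := aux_double_cross w v
  rw [h] at this
  have hz : crs w (0 : Fin 3 → ℝ) = 0 := by
    ext i; fin_cases i <;> simp [crs]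
  rw [hz] at this
  have h2 : (w ⬝ᵥ w) • v = (w ⬝ᵥ v) • w := (sub_eq_zero.mp this.symm).symm
  have h3 : (w ⬝ᵥ w)⁻¹ • ((w ⬝ᵥ w) • v) = (w ⬝ᵥ w)⁻¹ • ((w ⬝ᵥ v) • w) := by rw [h2]
  rwa [smul_smul, smul_smul, inv_mul_cancel₀ hs, one_smul] at h3

lemma aux_psd_trace_zero {N : Matrix (Fin 3) (Fin 3) ℝ} (hN : N.PosSemidef)
    (h : N.trace = 0) : N = 0 := by
  have hsym : ∀ i j, N j i = N i j := by
    intro i j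
    have := congrFun (congrFun hN.1 i) j
    simpa [conjTranspose_apply] using this
  have hq : ∀ x : Fin 3 → ℝ, 0 ≤ x 0 * (N 0 0 * x 0 + N 0 1 * x 1 + N 0 2 * x 2)
      + x 1 * (N 1 0 * x 0 + N 1 1 * x 1 + N 1 2 * x 2)
      + x 2 * (N 2 0 * x 0 + N 2 1 * x 1 + N 2 2 * x 2) := by
    intro x
    have := hN.dotProduct_mulVec_nonneg x
    simpa [dotProduct, mulVec, Fin.sum_univ_three] using this
  have htr : N 0 0 + N 1 1 + N 2 2 = 0 := by
    simpa [trace, diag, Fin.sum_univ_three] using h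
  have q0 := hq ![1,0,0]; have q1 := hq ![0,1,0]; have q2 := hq ![0,0,1]
  have q3 := hq ![1,1,0]; have q4 := hq ![1,-1,0]
  have q5 := hq ![1,0,1]; have q6 := hq ![1,0,-1]
  have q7 := hq ![0,1,1]; have q8 := hq ![0,1,-1]
  simp at q0 q1 q2 q3 q4 q5 q6 q7 q8
  ext i j
  fin_cases i <;> fin_cases j <;>
    simp only [Matrix.zero_apply, Fin.mk_zero, Fin.mk_one,
      show (⟨2, by omega⟩ : Fin 3) = 2 from rfl] <;>
    linarith [hsym 0 1, hsym 0 2, hsym 1 2]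

lemma aux_sym_idem_trace_zero {P : Matrix (Fin 3) (Fin 3) ℝ} (hs : Pᵀ = P)
    (hi : P * P = P) (ht : P.trace = 0) : P = 0 := by
  have hpsd : P.PosSemidef := by
    have h1 := posSemidef_conjTranspose_mul_self P
    have h2 : Pᴴ = Pᵀ := rfl
    rwa [h2, hs, hi] at h1
  exact aux_psd_trace_zero hpsd ht

noncomputable def axisv (R : Matrix (Fin 3) (Fin 3) ℝ) : Fin 3 → ℝ :=
  ![R 2 1 - R 1 2, R 0 2 - R 2 0, R 1 0 - R 0 1]

lemma aux_mul_vmv (X : Matrix (Fin 3) (Fin 3) ℝ) (u v : Fin 3 → ℝ) :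
    X * vecMulVec u v = vecMulVec (X *ᵥ u) v := by
  ext i j
  simp [mul_apply, vecMulVec_apply, mulVec, dotProduct, Fin.sum_univ_three]
  ring

lemma aux_vmv_mul (X : Matrix (Fin 3) (Fin 3) ℝ) (u v : Fin 3 → ℝ) :
    vecMulVec u v * X = vecMulVec u (Xᵀ *ᵥ v) := by
  ext i j
  simp [mul_apply, vecMulVec_apply, mulVec, dotProduct, Fin.sum_univ_three, transpose_apply]
  ring

lemma aux_vmv_vmv (u v u' v' : Fin 3 → ℝ) :
    vecMulVec u v * vecMulVec u' v' = (v ⬝ᵥ u') • vecMulVec u v' := by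
  ext i j
  simp [mul_apply, vecMulVec_apply, dotProduct, Fin.sum_univ_three]
  ring

lemma aux_vmv_t (u v : Fin 3 → ℝ) : (vecMulVec u v)ᵀ = vecMulVec v u := by
  ext i j; simp [vecMulVec_apply, transpose_apply]; ring

lemma aux_vmv_trace (u v : Fin 3 → ℝ) : (vecMulVec u v).trace = u ⬝ᵥ v := by
  simp [trace, diag, vecMulVec_apply, dotProduct, Fin.sum_univ_three]

lemma aux_vmv_mulVec (u v x : Fin 3 → ℝ) :
    vecMulVec u v *ᵥ x = (v ⬝ᵥ x) • u := by
  ext i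
  simp [vecMulVec_apply, mulVec, dotProduct, Fin.sum_univ_three]
  ring

lemma aux_vmv_smul_left (c : ℝ) (u v : Fin 3 → ℝ) :
    vecMulVec (c • u) v = c • vecMulVec u v := by
  ext i j; simp [vecMulVec_apply]; ring

lemma aux_axis_mulVec (R : Matrix (Fin 3) (Fin 3) ℝ) (x : Fin 3 → ℝ) :
    (R - Rᵀ) *ᵥ x = crs (axisv R) x := by
  ext i
  fin_cases i <;>
    simp [crs, axisv, mulVec, dotProduct, Fin.sum_univ_three, Matrix.sub_apply, transpose_apply] <;>
    ring

lemma aux_axis_sq (R : Matrix (Fin 3) (Fin 3) ℝ) :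
    (R - Rᵀ) * (R - Rᵀ) = vecMulVec (axisv R) (axisv R) - (axisv R ⬝ᵥ axisv R) • 1 := by
  ext i j
  fin_cases i <;> fin_cases j <;>
    simp [mul_apply, vecMulVec_apply, axisv, dotProduct, Fin.sum_univ_three, Matrix.sub_apply,
      transpose_apply, one_apply, Matrix.smul_apply] <;>
    ring

lemma aux_crs_sub_left (p q x : Fin 3 → ℝ) : crs (p - q) x = crs p x - crs q x := by
  ext i; fin_cases i <;> simp [crs] <;> ring

lemma aux_crs_all_zero {v : Fin 3 → ℝ} (h : ∀ x, crs v x = 0) : v = 0 := by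
  have h0 := congrFun (h ![0,1,0]) 0
  have h1 := congrFun (h ![1,0,0]) 2
  have h2 := congrFun (h ![0,1,0]) 2
  simp [crs] at h0 h1 h2
  ext i; fin_cases i <;> simp [h0, h1, h2]

lemma aux_caseB {M R : Matrix (Fin 3) (Fin 3) ℝ} (hMsym : Mᵀ = M) (hpsd : M.PosSemidef)
    (hrank : 2 ≤ M.rank) (h1 : Rᵀ * R = 1) (h2 : R.det = 1)
    (hcomm : M * R = Rᵀ * M) (hw : axisv R ≠ 0) : False := by
  have hRRt : R * Rᵀ = 1 := mul_eq_one_comm.mp h1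
  have hMRt : R * M = M * Rᵀ := by
    have e1 : R * (M * R) * Rᵀ = R * M := by
      rw [← mul_assoc R M R, mul_assoc (R * M) R Rᵀ, hRRt, mul_one]
    have e2 : R * (Rᵀ * M) * Rᵀ = M * Rᵀ := by
      rw [← mul_assoc R Rᵀ M, hRRt, one_mul]
    rw [← e1, hcomm, e2]
  set w := axisv R with hwdef
  have hAeq : R * (R - Rᵀ) * Rᵀ = R - Rᵀ := by
    calc R * (R - Rᵀ) * Rᵀ = (R * R - 1) * Rᵀ := by rw [mul_sub, hRRt]
    _ = R * (R * Rᵀ) - Rᵀ := by rw [sub_mul, one_mul, mul_assoc]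
    _ = R - Rᵀ := by rw [hRRt, mul_one]
  have hAfix : ∀ x, crs w x = crs (R *ᵥ w) x := by
    intro x
    calc crs w x = (R - Rᵀ) *ᵥ x := (aux_axis_mulVec R x).symm
    _ = (R * (R - Rᵀ) * Rᵀ) *ᵥ x := by rw [hAeq]
    _ = R *ᵥ ((R - Rᵀ) *ᵥ (Rᵀ *ᵥ x)) := by rw [mulVec_mulVec, mulVec_mulVec]
    _ = R *ᵥ crs w (Rᵀ *ᵥ x) := by rw [aux_axis_mulVec]
    _ = crs (R *ᵥ w) (R *ᵥ (Rᵀ *ᵥ x)) := (aux_equiv h1 h2 _ _).symm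
    _ = crs (R *ᵥ w) x := by rw [mulVec_mulVec, hRRt, one_mulVec]
  have hRw : R *ᵥ w = w := by
    have hz : R *ᵥ w - w = 0 := by
      apply aux_crs_all_zero
      intro x
      rw [aux_crs_sub_left, ← hAfix x, sub_self]
    exact sub_eq_zero.mp hz
  have hMwfix : R *ᵥ (M *ᵥ w) = M *ᵥ w := by
    have e : M *ᵥ w = Rᵀ *ᵥ (M *ᵥ w) := by
      calc M *ᵥ w = M *ᵥ (R *ᵥ w) := by rw [hRw]
      _ = (M * R) *ᵥ w := by rw [mulVec_mulVec]
      _ = (Rᵀ * M) *ᵥ w := by rw [hcomm]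
      _ = Rᵀ *ᵥ (M *ᵥ w) := by rw [mulVec_mulVec]
    calc R *ᵥ (M *ᵥ w) = R *ᵥ (Rᵀ *ᵥ (M *ᵥ w)) := by rw [← e]
    _ = (R * Rᵀ) *ᵥ (M *ᵥ w) := by rw [mulVec_mulVec]
    _ = M *ᵥ w := by rw [hRRt, one_mulVec]
  have hcross : crs w (M *ᵥ w) = 0 := by
    by_contra hc
    have hR1 : R = 1 := aux_fix_two h1 h2 hRw hMwfix hc
    apply hw
    rw [hwdef, hR1]
    ext i; fin_cases i <;> simp [axisv, one_apply]
  set μ := (w ⬝ᵥ w)⁻¹ * (w ⬝ᵥ (M *ᵥ w)) with hμ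
  have hMw : M *ᵥ w = μ • w := aux_parallel hw hcross
  clear_value μ
  clear hμ
  have hws0 : w ⬝ᵥ w ≠ 0 := fun h => hw (dotProduct_self_eq_zero.mp h)
  have hws0' : w 0 * w 0 + w 1 * w 1 + w 2 * w 2 ≠ 0 := by
    simpa [dotProduct, Fin.sum_univ_three] using hws0
  have hanti : M * (R - Rᵀ) = -((R - Rᵀ) * M) := by
    have hsum : M * (R - Rᵀ) + (R - Rᵀ) * M = 0 := by
      rw [mul_sub, sub_mul, hcomm, hMRt]
      abel
    exact eq_neg_of_add_eq_zero_left hsum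
  have htrA : (M * ((R - Rᵀ) * (R - Rᵀ))).trace = 0 := by
    have e1 : M * ((R - Rᵀ) * (R - Rᵀ)) = -((R - Rᵀ) * M * (R - Rᵀ)) := by
      rw [← mul_assoc, hanti, neg_mul]
    have e2 : (M * ((R - Rᵀ) * (R - Rᵀ))).trace
        = -((M * ((R - Rᵀ) * (R - Rᵀ))).trace) := by
      nth_rewrite 1 [e1]
      rw [trace_neg, mul_assoc, trace_mul_comm, mul_assoc]
    linarith [e2]
  have htrM : M.trace = μ := by
    have e2 : M * ((R - Rᵀ) * (R - Rᵀ)) = M * vecMulVec w w - (w ⬝ᵥ w) • M := by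
      rw [aux_axis_sq, mul_sub, mul_smul_comm, mul_one]
    have e3 : (M * vecMulVec w w).trace = μ * (w ⬝ᵥ w) := by
      rw [aux_mul_vmv, hMw, aux_vmv_smul_left, trace_smul, aux_vmv_trace, smul_eq_mul]
    have e4 := htrA
    rw [e2, trace_sub, trace_smul, e3, smul_eq_mul] at e4
    have e5 : (w ⬝ᵥ w) * M.trace = (w ⬝ᵥ w) * μ := by ring_nf; ring_nf at e4; linarith
    exact mul_left_cancel₀ hws0 e5
  set c := (w ⬝ᵥ w)⁻¹ * μ with hc
  clear_value c
  set N := M - c • vecMulVec w w with hN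
  clear_value N
  have hwM : ∀ x, w ⬝ᵥ (M *ᵥ x) = μ * (w ⬝ᵥ x) := by
    intro x
    rw [dotProduct_mulVec]
    have : w ᵥ* M = μ • w := by
      rw [← hMsym, vecMul_transpose, hMw]
    rw [this, smul_dotProduct, smul_eq_mul]
  have hNpsd : N.PosSemidef := by
    refine PosSemidef.of_dotProduct_mulVec_nonneg ?_ ?_
    · show Nᴴ = N
      have hct : Nᴴ = Nᵀ := rfl
      rw [hct, hN, transpose_sub, transpose_smul, aux_vmv_t, hMsym]
    · intro x
      have hstar : star x = x := funext fun i => star_trivial _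
      have hxw : N *ᵥ x = M *ᵥ x - (c * (w ⬝ᵥ x)) • w := by
        rw [hN, sub_mulVec, smul_mulVec, aux_vmv_mulVec, smul_smul]
      set y := x - ((w ⬝ᵥ w)⁻¹ * (w ⬝ᵥ x)) • w with hy
      have key : x ⬝ᵥ (N *ᵥ x) = y ⬝ᵥ (M *ᵥ y) := by
        have hMy : M *ᵥ y = M *ᵥ x - ((w ⬝ᵥ w)⁻¹ * (w ⬝ᵥ x) * μ) • w := by
          rw [hy, mulVec_sub, mulVec_smul, hMw, smul_smul]
        rw [hxw, hy, hMy]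
        simp only [sub_dotProduct, dotProduct_sub, smul_dotProduct, dotProduct_smul,
          smul_eq_mul]
        rw [hwM x, dotProduct_comm x w, hc]
        field_simp [hws0']
        ring
      rw [hstar, key]
      have hstary : star y = y := funext fun i => star_trivial _
      have := hpsd.dotProduct_mulVec_nonneg y
      rwa [hstary] at this
  have hNtr : N.trace = 0 := by
    rw [hN, trace_sub, trace_smul, aux_vmv_trace, htrM, hc, smul_eq_mul]
    field_simp [hws0']
    simp
  have hN0 : N = 0 := aux_psd_trace_zero hNpsd hNtr
  have hMc : M = c • vecMulVec w w := by
    have := hN0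
    rw [hN] at this
    exact sub_eq_zero.mp this
  have hrank1 : M.rank ≤ 1 := by
    rw [hMc, vecMulVec_eq (Fin 1), ← Matrix.smul_mul]
    refine le_trans (rank_mul_le_left _ _) (le_trans (rank_le_card_width _) ?_)
    simp
  have : (2 : ℕ) ≤ 1 := le_trans hrank hrank1
  norm_num at this

lemma aux_caseA {M R : Matrix (Fin 3) (Fin 3) ℝ} (hMsym : Mᵀ = M)
    (h1 : Rᵀ * R = 1) (h2 : R.det = 1) (hcomm : M * R = Rᵀ * M)
    (hne : R ≠ 1) (hw : axisv R = 0) :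
    ∃ u : Fin 3 → ℝ, u ⬝ᵥ u = 1 ∧ M *ᵥ u = (u ⬝ᵥ (M *ᵥ u)) • u ∧
      R = (2 : ℝ) • vecMulVec u u - 1 := by
  have hRsym : Rᵀ = R := by
    have e0 := congrFun hw 0
    have e1 := congrFun hw 1
    have e2 := congrFun hw 2
    simp [axisv] at e0 e1 e2
    ext i j
    fin_cases i <;> fin_cases j <;> simp [transpose_apply] <;> linarith
  have hR2 : R * R = 1 := by
    have := h1; rwa [hRsym] at this
  have hadj : adjugate R = R := by
    calc adjugate R = adjugate R * (R * R) := by rw [hR2, mul_one]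
    _ = adjugate R * R * R := by rw [mul_assoc]
    _ = (R.det • 1) * R := by rw [adjugate_mul]
    _ = R := by rw [h2, one_smul, one_mul]
  have htr : (R.trace - 3) * (R.trace + 1) = 0 := by
    have s01 : R 1 0 = R 0 1 := by
      have := congrFun (congrFun hRsym 0) 1; simpa [transpose_apply] using this
    have s02 : R 2 0 = R 0 2 := by
      have := congrFun (congrFun hRsym 0) 2; simpa [transpose_apply] using this
    have s12 : R 2 1 = R 1 2 := by
      have := congrFun (congrFun hRsym 1) 2; simpa [transpose_apply] using this
    have q0 := congrFun (congrFun hR2 0) 0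
    have q1 := congrFun (congrFun hR2 1) 1
    have q2 := congrFun (congrFun hR2 2) 2
    simp [mul_apply, Fin.sum_univ_three, one_apply] at q0 q1 q2
    have hadj' := hadj
    rw [adjugate_fin_three] at hadj'
    have a00 := congrFun (congrFun hadj' 0) 0
    have a11 := congrFun (congrFun hadj' 1) 1
    have a22 := congrFun (congrFun hadj' 2) 2
    simp at a00 a11 a22
    have ht : R.trace = R 0 0 + R 1 1 + R 2 2 := by
      simp [trace, diag, Fin.sum_univ_three]
    rw [ht]
    rw [s01] at q0 q1 a22
    rw [s02] at q0 q2 a11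
    rw [s12] at q1 q2 a00
    linear_combination q0 + q1 + q2 + 2 * a00 + 2 * a11 + 2 * a22
  have ht3 : R.trace ≠ 3 := by
    intro h3
    apply hne
    have hidem : ((1/2 : ℝ) • (1 - R)) * ((1/2 : ℝ) • (1 - R)) = (1/2 : ℝ) • (1 - R) := by
      have hexp : (1 - R) * (1 - R) = (1 - R) + (1 - R) := by
        simp only [sub_mul, mul_sub, one_mul, mul_one, hR2]; abel
      calc ((1/2 : ℝ) • (1 - R)) * ((1/2 : ℝ) • (1 - R))
          = ((1/2 : ℝ) * (1/2 : ℝ)) • ((1 - R) * (1 - R)) := by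
            rw [smul_mul_assoc, mul_smul_comm, smul_smul]
      _ = ((1/4 : ℝ)) • ((1 - R) + (1 - R)) := by rw [hexp]; norm_num
      _ = (1/2 : ℝ) • (1 - R) := by module
    have hP : (1/2 : ℝ) • (1 - R) = 0 := by
      apply aux_sym_idem_trace_zero _ hidem
      · rw [trace_smul, trace_sub, trace_one, h3]
        norm_num
      · rw [transpose_smul, transpose_sub, transpose_one, hRsym]
    have h10 : (1 : Matrix (Fin 3) (Fin 3) ℝ) - R = 0 := by
      rcases smul_eq_zero.mp hP with h | h
      · norm_num at h
      · exact h
    have := sub_eq_zero.mp h10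
    exact this.symm
  have htm1 : R.trace = -1 := by
    rcases mul_eq_zero.mp htr with h | h
    · exact absurd (by linarith : R.trace = 3) ht3
    · linarith
  -- find a unit fixed vector
  have hdet0 : (R - 1).det = 0 := by
    have e1 : (R - 1).det = (Rᵀ - 1).det := by
      rw [← det_transpose (R - 1), transpose_sub, transpose_one]
    have e2 : Rᵀ - 1 = Rᵀ * (1 - R) := by rw [mul_sub, mul_one, h1]
    have e3 : (Rᵀ - 1).det = (1 - R).det := by
      rw [e2, det_mul, det_transpose, h2, one_mul]
    have e4 : (1 : Matrix (Fin 3) (Fin 3) ℝ) - R = -(R - 1) := (neg_sub R 1).symm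
    have e5 : (1 - R).det = -(R - 1).det := by
      rw [e4, det_neg]
      norm_num [Fintype.card_fin]
    linarith [e1, e3, e5]
  obtain ⟨a, ha0, hav⟩ := (Matrix.exists_mulVec_eq_zero_iff).mpr hdet0
  have hRa : R *ᵥ a = a := by
    have := hav
    rwa [sub_mulVec, one_mulVec, sub_eq_zero] at this
  have hapos : 0 < a ⬝ᵥ a := by
    have hne0 : a ⬝ᵥ a ≠ 0 := fun h => ha0 (dotProduct_self_eq_zero.mp h)
    have hnn : 0 ≤ a ⬝ᵥ a := by
      simp only [dotProduct, Fin.sum_univ_three]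
      nlinarith [sq_nonneg (a 0), sq_nonneg (a 1), sq_nonneg (a 2)]
    exact lt_of_le_of_ne hnn (Ne.symm hne0)
  set u := (Real.sqrt (a ⬝ᵥ a))⁻¹ • a with hu
  have hspos : 0 < Real.sqrt (a ⬝ᵥ a) := Real.sqrt_pos.mpr hapos
  have hmul : Real.sqrt (a ⬝ᵥ a) * Real.sqrt (a ⬝ᵥ a) = a ⬝ᵥ a :=
    Real.mul_self_sqrt hapos.le
  have huu : u ⬝ᵥ u = 1 := by
    rw [hu, smul_dotProduct, dotProduct_smul, smul_eq_mul, smul_eq_mul,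
      ← mul_assoc, ← mul_inv, hmul, inv_mul_cancel₀ hapos.ne']
  have hRu : R *ᵥ u = u := by rw [hu, mulVec_smul, hRa]
  set U := vecMulVec u u with hU
  have hUU : U * U = U := by rw [hU, aux_vmv_vmv, huu, one_smul]
  have hRU : R * U = U := by rw [hU, aux_mul_vmv, hRu]
  have hUR : U * R = U := by rw [hU, aux_vmv_mul, hRsym, hRu]
  have hQQ : (R + 1 - (U + U)) * (R + 1 - (U + U))
      = (R + 1 - (U + U)) + (R + 1 - (U + U)) := by
    simp only [sub_mul, mul_sub, add_mul, mul_add, one_mul, mul_one, hR2, hRU, hUR, hUU]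
    abel
  have hQt : (R + 1 - (U + U))ᵀ = R + 1 - (U + U) := by
    rw [transpose_sub, transpose_add, transpose_add, transpose_one, hRsym, hU, aux_vmv_t]
  have hQtr : (R + 1 - (U + U)).trace = 0 := by
    rw [trace_sub, trace_add, trace_add, trace_one, hU, aux_vmv_trace, huu, htm1]
    norm_num
  have hQ0 : R + 1 - (U + U) = 0 := by
    have hidem : ((1/2 : ℝ) • (R + 1 - (U + U))) * ((1/2 : ℝ) • (R + 1 - (U + U)))
        = (1/2 : ℝ) • (R + 1 - (U + U)) := by
      calc ((1/2 : ℝ) • (R + 1 - (U + U))) * ((1/2 : ℝ) • (R + 1 - (U + U)))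
          = ((1/2 : ℝ) * (1/2 : ℝ)) • ((R + 1 - (U + U)) * (R + 1 - (U + U))) := by
            rw [smul_mul_assoc, mul_smul_comm, smul_smul]
      _ = (1/4 : ℝ) • ((R + 1 - (U + U)) + (R + 1 - (U + U))) := by rw [hQQ]; norm_num
      _ = (1/2 : ℝ) • (R + 1 - (U + U)) := by module
    have h12 : (1/2 : ℝ) • (R + 1 - (U + U)) = 0 := by
      apply aux_sym_idem_trace_zero _ hidem
      · rw [trace_smul, hQtr, smul_zero]
      · rw [transpose_smul, hQt]
    rcases smul_eq_zero.mp h12 with h | h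
    · norm_num at h
    · exact h
  have hRform : R = (2 : ℝ) • U - 1 := by
    have hsum : R + 1 = U + U := by
      have := sub_eq_zero.mp hQ0
      simpa using this
    rw [two_smul, ← hsum]
    abel
  refine ⟨u, huu, ?_, by rw [hRform, hU]⟩
  have hMR2 : M * R = R * M := by rw [hcomm, hRsym]
  have hMU : M * U = U * M := by
    have hform := hMR2
    rw [hRform] at hform
    have hexp : M * ((2:ℝ) • U - 1) = (2:ℝ) • (M * U) - M := by
      rw [mul_sub, mul_one, mul_smul_comm]
    have hexp2 : ((2:ℝ) • U - 1) * M = (2:ℝ) • (U * M) - M := by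
      rw [sub_mul, one_mul, smul_mul_assoc]
    rw [hexp, hexp2] at hform
    have h4 : (2:ℝ) • (M * U) = (2:ℝ) • (U * M) := by
      have := congrArg (fun X => X + M) hform
      simpa using this
    have h5 := congrArg (fun X => (1/2 : ℝ) • X) h4
    simpa [smul_smul] using h5
  have e6 : (M * U) *ᵥ u = (U * M) *ᵥ u := by rw [hMU]
  rw [← mulVec_mulVec, ← mulVec_mulVec] at e6
  rw [hU, aux_vmv_mulVec, huu, one_smul] at e6
  rw [aux_vmv_mulVec] at e6
  exact e6

lemma aux_main {M R : Matrix (Fin 3) (Fin 3) ℝ} (hMsym : Mᵀ = M) (hpsd : M.PosSemidef)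
    (hrank : 2 ≤ M.rank) (h1 : Rᵀ * R = 1) (h2 : R.det = 1)
    (hcomm : M * R = Rᵀ * M) (hne : R ≠ 1) :
    ∃ u : Fin 3 → ℝ, u ⬝ᵥ u = 1 ∧ M *ᵥ u = (u ⬝ᵥ (M *ᵥ u)) • u ∧
      R = (2 : ℝ) • vecMulVec u u - 1 := by
  by_cases hw : axisv R = 0
  · exact aux_caseA hMsym h1 h2 hcomm hne hw
  · exact (aux_caseB hMsym hpsd hrank h1 h2 hcomm hw).elim

/-- Characterization of the undesired equilibria of the closed-loop error dynamics:
for a symmetric positive semidefinite `M` of rank at least 2, the equilibrium conditions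
`P_a(M R̃) = 0`, `−k_c k_p p̃_e + ṽ = 0`, `−k_c k_v p̃_e + (I − R̃) g = 0` hold with
`(R̃, p̃_e, ṽ) ≠ (I, 0, 0)` iff `R̃ = R_a(π, u) = 2uuᵀ − I` for a unit eigenvector `u` of `M`,
`p̃_e = (k_c k_v)⁻¹ (I − R̃) g`, and `ṽ = k_c k_p p̃_e`. -/
theorem undesired_equilibria
    (M : Matrix (Fin 3) (Fin 3) ℝ) (hMsym : M.IsSymm) (hMpsd : M.PosSemidef)
    (hMrank : 2 ≤ M.rank)
    (g : Fin 3 → ℝ) (kc kp kv : ℝ) (hkc : 0 < kc) (hkp : 0 < kp) (hkv : 0 < kv)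
    (Rt : Matrix (Fin 3) (Fin 3) ℝ) (hRt : SO3 Rt) (pe vt : Fin 3 → ℝ) :
    (antiProj (M * Rt) = 0 ∧
      (-(kc * kp)) • pe + vt = 0 ∧
      (-(kc * kv)) • pe + (1 - Rt).mulVec g = 0 ∧
      ¬(Rt = 1 ∧ pe = 0 ∧ vt = 0)) ↔
    (∃ (u : Fin 3 → ℝ) (lam : ℝ), u ⬝ᵥ u = 1 ∧ M.mulVec u = lam • u ∧
      Rt = (2 : ℝ) • vecMulVec u u - 1 ∧
      pe = (kc * kv)⁻¹ • (1 - Rt).mulVec g ∧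
      vt = (kc * kp) • pe) := by
  have hMs : Mᵀ = M := hMsym
  have hkvne : kc * kv ≠ 0 := by positivity
  constructor
  · rintro ⟨hP, he2, he3, hnt⟩
    have hcomm : M * Rt = Rtᵀ * M := by
      have h0 : M * Rt - (M * Rt)ᵀ = 0 := by
        have := hP
        rw [antiProj] at this
        rcases smul_eq_zero.mp this with h | h
        · norm_num at h
        · exact h
      have h1 := sub_eq_zero.mp h0
      rw [h1, transpose_mul, hMs]
    have hpe : pe = (kc * kv)⁻¹ • (1 - Rt).mulVec g := by
      have hsub : (1 - Rt) *ᵥ g - (kc * kv) • pe = 0 := by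
        rw [← he3, neg_smul]; abel
      have heq := sub_eq_zero.mp hsub
      rw [heq, smul_smul, inv_mul_cancel₀ hkvne, one_smul]
    have hvt : vt = (kc * kp) • pe := by
      have hsub : vt - (kc * kp) • pe = 0 := by
        rw [← he2, neg_smul]; abel
      exact sub_eq_zero.mp hsub
    have hne : Rt ≠ 1 := by
      intro h1
      apply hnt
      have hpe0 : pe = 0 := by rw [hpe, h1]; simp
      exact ⟨h1, hpe0, by rw [hvt, hpe0, smul_zero]⟩
    obtain ⟨u, huu, hMu, hRform⟩ := aux_main hMs hMpsd hMrank hRt.1 hRt.2 hcomm hne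
    exact ⟨u, u ⬝ᵥ (M *ᵥ u), huu, hMu, hRform, hpe, hvt⟩
  · rintro ⟨u, lam, huu, hMu, hRform, hpe, hvt⟩
    have hne : Rt ≠ 1 := by
      intro h1
      rw [h1] at hRform
      have htr := congrArg Matrix.trace hRform
      rw [trace_one, trace_sub, trace_smul, aux_vmv_trace, huu, trace_one] at htr
      norm_num [Fintype.card_fin] at htr
    refine ⟨?_, ?_, ?_, fun h => hne h.1⟩
    · have hMRt : M * Rt = (2 * lam) • vecMulVec u u - M := by
        rw [hRform, mul_sub, mul_one, mul_smul_comm, aux_mul_vmv, hMu, aux_vmv_smul_left,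
          smul_smul]
      have hsym2 : (M * Rt)ᵀ = M * Rt := by
        rw [hMRt, transpose_sub, transpose_smul, aux_vmv_t, hMs]
      rw [antiProj, hsym2, sub_self, smul_zero]
    · rw [hvt, neg_smul, neg_add_cancel]
    · have hcoef : -(kc * kv) * (kc * kv)⁻¹ = -1 := by
        field_simp
      rw [hpe, smul_smul, hcoef, neg_one_smul, neg_add_cancel]
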